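/- arXiv:1605.08339 — 4 statements merged into one kernel-verified Lean document; each statement's English description precedes it below -/
import Mathlib

section
/- If τ is a strong stationary time for a Markov chain with stationary distribution π started from x₀, then the separation distance satisfies s(t) ≤ P(τ > t) for every t ≥ 0, where s(t) = 1 − min over states x of K^t(x₀, x)/π(x). -/
open MeasureTheory
open scoped ENNReal

/-!
On the event `{τ ≤ t}` the chain is already distributed according to `π`, so
`π x * P(τ ≤ t) = P(X_t = x, τ ≤ t) ≤ P(X_t = x)`. Dividing by `π x` and passing to the
complementary event `{t < τ}` gives the bound.
-/

namespace MeasureTheory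

variable {Ω : Type*} [MeasurableSpace Ω] {μ : Measure Ω}

lemma measure_le_measure_div_of_measure_inter_eq [IsFiniteMeasure μ] {A B : Set Ω}
    {c : ℝ≥0∞} (hc : c ≠ 0) (h : μ (A ∩ B) = c * μ B) : μ B ≤ μ A / c := by
  rw [ENNReal.le_div_iff_mul_le (Or.inl hc) (Or.inr (measure_ne_top μ A)), mul_comm, ← h]
  exact measure_mono Set.inter_subset_left

lemma one_sub_measure_le_measure_compl [IsProbabilityMeasure μ] (s : Set Ω) :
    1 - μ s ≤ μ sᶜ := by
  rw [tsub_le_iff_left, ← measure_univ (μ := μ)]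
  exact measure_univ_le_add_compl s

end MeasureTheory

theorem sep_le_sst_general {Ω : Type*} [MeasurableSpace Ω] (μ : Measure Ω) [IsProbabilityMeasure μ]
    {S : Type*}
    (X : ℕ → Ω → S) (τ : Ω → ℕ∞) (π : S → ℝ≥0∞)
    (hπpos : ∀ x, π x ≠ 0)
    (hsst : ∀ (t : ℕ) (x : S),
      μ {ω | X t ω = x ∧ τ ω ≤ (t : ℕ∞)} = π x * μ {ω | τ ω ≤ (t : ℕ∞)}) :
    ∀ (t : ℕ) (x : S),
      1 - μ {ω | X t ω = x} / π x ≤ μ {ω | (t : ℕ∞) < τ ω} := by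
  intro t x
  have hstopped : μ {ω | τ ω ≤ (t : ℕ∞)} ≤ μ {ω | X t ω = x} / π x :=
    measure_le_measure_div_of_measure_inter_eq (hπpos x) (hsst t x)
  calc 1 - μ {ω | X t ω = x} / π x ≤ 1 - μ {ω | τ ω ≤ (t : ℕ∞)} := tsub_le_tsub_left hstopped 1
    _ ≤ μ {ω | τ ω ≤ (t : ℕ∞)}ᶜ := one_sub_measure_le_measure_compl _
    _ = μ {ω | (t : ℕ∞) < τ ω} := by simp only [Set.compl_ofPred, not_le]

/-- If `τ` is a strong stationary time for a Markov chain `(X_t)` on a finite state space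
with positive stationary distribution `π`, started from a fixed state (so that
`μ {X_t = x} = K^t(x₀,x)`), then the separation distance satisfies
`1 - K^t(x₀,x)/π(x) ≤ P(τ > t)` for every `t` and every state `x`. -/
theorem sep_le_sst {Ω : Type*} [MeasurableSpace Ω] (μ : Measure Ω) [IsProbabilityMeasure μ]
    {S : Type*} [Fintype S]
    (X : ℕ → Ω → S) (τ : Ω → ℕ∞) (π : S → ℝ≥0∞)
    (hπpos : ∀ x, π x ≠ 0) (hπsum : ∑ x, π x = 1)
    (hsst : ∀ (t : ℕ) (x : S),
      μ {ω | X t ω = x ∧ τ ω ≤ (t : ℕ∞)} = π x * μ {ω | τ ω ≤ (t : ℕ∞)}) :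
    ∀ (t : ℕ) (x : S),
      1 - μ {ω | X t ω = x} / π x ≤ μ {ω | (t : ℕ∞) < τ ω} :=
  sep_le_sst_general μ X τ π hπpos hsst
end

section
/- For the inverse riffle shuffle on n cards, with t = 2·log₂n + c (c ≥ 0), the separation distance satisfies s(t) ≤ (n(n−1)/2)·(1/2)^t ≤ 1/2^{c+1}. -/
open scoped Classical

/-- New position of the card at (old) position `p` after the inverse riffle shuffle that
moves the set of cards `A` to the top of the deck `σ` keeping relative orders. -/
def rifflePos {n : ℕ} (A : Finset (Fin n)) (σ : Equiv.Perm (Fin n)) (p : Fin n) : ℕ :=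
  if σ p ∈ A then (Finset.univ.filter fun p' => p' < p ∧ σ p' ∈ A).card
  else A.card + (Finset.univ.filter fun p' => p' < p ∧ σ p' ∉ A).card

/-- Transition matrix of the inverse riffle shuffle on `n` cards: each subset `A` of the
cards is chosen with probability `2^{-n}` and the cards of `A` are moved to the top,
keeping relative orders.  `τ` is the result of the `A`-shuffle of `σ` iff the card `σ p`
sits at position `rifflePos A σ p` in `τ`. -/
noncomputable def riffleKernel (n : ℕ) :
    Matrix (Equiv.Perm (Fin n)) (Equiv.Perm (Fin n)) ℝ :=
  fun σ τ =>
    ((Finset.univ.filter fun A : Finset (Fin n) =>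
        ∀ p : Fin n, ((τ.symm (σ p) : Fin n) : ℕ) = rifflePos A σ p).card : ℝ) / 2 ^ n

/-! Give each card the binary label whose `k`-th digit is its mark in the `k`-th shuffle
(`0` for the cards moved to the top), so that the last shuffle is the most significant digit.
An inverse riffle shuffle is a stable sort by the current digit, hence after `t` shuffles the
deck is the radix sort of the cards by their labels, ties broken by the initial position.
Marks and labels are in bijection, and every label vector that strictly increases along the
target deck `x` produces `x`; there are `C(2^t, n)` of them, so
`n! P^t(σ₀, x) ≥ n! C(2^t, n) / 2^{nt} = ∏_{i<n} (1 - i/2^t) ≥ 1 - C(n,2)/2^t`. -/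

open Finset Equiv Real

namespace Tuple

variable {n : ℕ} {α : Type*} [LinearOrder α] {k : Fin n → α} {σ : Perm (Fin n)}

theorem eq_sort_of_strictMono_comp (h : StrictMono (k ∘ σ)) : σ = sort k :=
  eq_sort_iff.2 ⟨h.monotone, fun _ _ hij he => absurd he (h hij).ne⟩

theorem strictMono_comp_sort (hk : Function.Injective k) : StrictMono (k ∘ sort k) :=
  (monotone_sort k).strictMono_of_injective (hk.comp (sort k).injective)

theorem symm_apply_eq_card_lt_of_strictMono_comp (h : StrictMono (k ∘ σ)) (i : Fin n) :
    (σ.symm i : ℕ) = #{j | k j < k i} := by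
  rw [← Fin.card_Iio, ← filter_gt_eq_Iio]
  refine card_equiv σ fun q => ?_
  simp only [mem_filter, mem_univ, true_and]
  conv_rhs => rw [← σ.apply_symm_apply i]
  exact h.lt_iff_lt.symm

end Tuple

section StrictMonoCount

variable {n : ℕ} {β : Type*} [LinearOrder β] [Fintype β]

theorem card_strictMono_comp_perm (x : Perm (Fin n)) :
    #{w : Fin n → β | StrictMono (w ∘ x)} = #{u : Fin n → β | StrictMono u} :=
  card_equiv (x.symm.arrowCongr (Equiv.refl β)) fun _ => by
    simp only [mem_filter, mem_univ, true_and]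
    rfl

theorem factorial_mul_card_strictMono :
    n.factorial * #{u : Fin n → β | StrictMono u} = (Fintype.card β).descFactorial n := by
  have hfiber (x : Perm (Fin n)) :
      #{w ∈ {w : Fin n → β | Function.Injective w} | Tuple.sort w = x} =
        #{u : Fin n → β | StrictMono u} := by
    rw [filter_filter, ← card_strictMono_comp_perm x]
    refine congrArg card (filter_congr fun w _ => ⟨?_, fun h => ⟨?_, ?_⟩⟩)
    · rintro ⟨hw, rfl⟩
      exact Tuple.strictMono_comp_sort hw
    · exact h.injective.of_comp_right x.surjective
    · exact (Tuple.eq_sort_of_strictMono_comp h).symm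
  calc n.factorial * #{u : Fin n → β | StrictMono u}
      = ∑ _x : Perm (Fin n), #{u : Fin n → β | StrictMono u} := by
        rw [sum_const, card_univ, Fintype.card_perm, Fintype.card_fin, smul_eq_mul]
    _ = ∑ x : Perm (Fin n),
          #{w ∈ {w : Fin n → β | Function.Injective w} | Tuple.sort w = x} :=
        sum_congr rfl fun x _ => (hfiber x).symm
    _ = #{w : Fin n → β | Function.Injective w} :=
        (card_eq_sum_card_fiberwise fun _ _ => mem_univ _).symm
    _ = (Fintype.card β).descFactorial n := by
        rw [← Fintype.card_subtype, Fintype.card_congr (subtypeInjectiveEquivEmbedding _ _),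
          Fintype.card_embedding_eq, Fintype.card_fin]

end StrictMonoCount

section MarkovChain

variable {α S : Type*} [Fintype α] [Fintype S] [DecidableEq S]

theorem Matrix.pow_apply_eq_card_foldl_div (g : α → S → S) {K : Matrix S S ℝ}
    (hK : ∀ s s', K s s' = #{a | g a s = s'} / Fintype.card α) (t : ℕ) (s s' : S) :
    (K ^ t) s s' =
      #{f : Fin t → α | Fin.foldl t (fun r k => g (f k) r) s = s'} / Fintype.card α ^ t := by
  induction t generalizing s' with
  | zero => by_cases h : s = s' <;> simp [h]
  | succ t ih =>
    set F : (Fin t → α) → S := fun f => Fin.foldl t (fun r k => g (f k) r) s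
    have hcount : #{f : Fin (t + 1) → α | Fin.foldl (t + 1) (fun r k => g (f k) r) s = s'} =
        ∑ τ, #{f | F f = τ} * #{a | g a τ = s'} :=
      calc #{f : Fin (t + 1) → α | Fin.foldl (t + 1) (fun r k => g (f k) r) s = s'}
          = #{p : α × (Fin t → α) | g p.1 (F p.2) = s'} :=
            card_equiv (Fin.snocEquiv _).symm fun f => by simp [F, Fin.foldl_succ_last, Fin.init]
        _ = ∑ f, #{a | g a (F f) = s'} := by
            simp only [card_filter, Fintype.sum_prod_type_right]
        _ = ∑ τ, #{f | F f = τ} * #{a | g a τ = s'} := by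
            rw [← sum_fiberwise univ F]
            refine sum_congr rfl fun τ _ => ?_
            rw [card_eq_sum_ones, sum_mul, one_mul]
            exact sum_congr rfl fun f hf => by rw [(mem_filter.1 hf).2]
    rw [pow_succ, Matrix.mul_apply, hcount]
    simp only [ih, hK, F, Nat.cast_sum, Nat.cast_mul, pow_succ, div_mul_div_comm, sum_div]

end MarkovChain

theorem Finset.one_sub_sum_le_prod_one_sub {ι : Type*} (s : Finset ι) {f : ι → ℝ}
    (h0 : ∀ i ∈ s, 0 ≤ f i) (h1 : ∀ i ∈ s, f i ≤ 1) :
    1 - ∑ i ∈ s, f i ≤ ∏ i ∈ s, (1 - f i) := by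
  induction s using Finset.induction_on with
  | empty => simp
  | insert a s ha ih =>
    rw [sum_insert ha, prod_insert ha]
    have ih := ih (fun i hi => h0 i (mem_insert_of_mem hi))
      (fun i hi => h1 i (mem_insert_of_mem hi))
    have hs : 0 ≤ ∑ i ∈ s, f i := sum_nonneg fun i hi => h0 i (mem_insert_of_mem hi)
    have ha0 := h0 a (mem_insert_self a s)
    have ha1 := h1 a (mem_insert_self a s)
    nlinarith [mul_le_mul_of_nonneg_left ih (sub_nonneg.2 ha1), mul_nonneg ha0 hs]

theorem Finset.sum_range_natCast_id (n : ℕ) : ∑ i ∈ range n, (i : ℝ) = n * (n - 1) / 2 := by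
  induction n with
  | zero => simp
  | succ n ih => rw [sum_range_succ, ih]; push_cast; ring

theorem one_sub_descFactorial_div_pow_le (M n : ℕ) (hM : 0 < M) :
    1 - (M.descFactorial n : ℝ) / M ^ n ≤ n * (n - 1) / 2 / M := by
  have hM' : (0 : ℝ) < M := Nat.cast_pos.2 hM
  by_cases hnM : n ≤ M
  · have hprod : (M.descFactorial n : ℝ) / M ^ n = ∏ i ∈ range n, (1 - (i : ℝ) / M) := by
      rw [Nat.descFactorial_eq_prod_range, Nat.cast_prod, pow_eq_prod_const, ← prod_div_distrib]
      refine prod_congr rfl fun i hi => ?_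
      rw [Nat.cast_sub ((mem_range.1 hi).le.trans hnM), sub_div, div_self hM'.ne']
    have hprod_ge := (range n).one_sub_sum_le_prod_one_sub (f := fun i => (i : ℝ) / M)
      (fun i _ => by positivity)
      (fun i hi => (div_le_one hM').2 (by exact_mod_cast (mem_range.1 hi).le.trans hnM))
    rw [← sum_div, Finset.sum_range_natCast_id] at hprod_ge
    rw [hprod]
    linarith
  · rw [Nat.descFactorial_eq_zero_iff_lt.2 (not_le.1 hnM), Nat.cast_zero, zero_div, sub_zero,
      le_div_iff₀ hM']
    have hn : (M : ℝ) + 1 ≤ n := by exact_mod_cast not_le.1 hnM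
    have hM1 : (1 : ℝ) ≤ M := by exact_mod_cast hM
    nlinarith

theorem choose_two_mul_half_pow_le {n t : ℕ} {c : ℝ} (ht : 2 * logb 2 n + c ≤ t) :
    (n : ℝ) * (n - 1) / 2 * (1 / 2) ^ t ≤ 1 / 2 ^ (c + 1) := by
  rcases n.eq_zero_or_pos with rfl | hn
  · simp only [CharP.cast_eq_zero, zero_mul, zero_div]
    positivity
  have hn' : (0 : ℝ) < n := Nat.cast_pos.2 hn
  have h2t : (n : ℝ) ^ 2 * 2 ^ c ≤ 2 ^ t :=
    calc (n : ℝ) ^ 2 * 2 ^ c = 2 ^ (2 * logb 2 n + c) := by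
          rw [rpow_add two_pos, mul_comm 2 (logb 2 n), rpow_mul zero_le_two,
            rpow_logb two_pos one_lt_two.ne' hn', rpow_two]
      _ ≤ 2 ^ (t : ℝ) := rpow_le_rpow_of_exponent_le one_le_two ht
      _ = 2 ^ t := rpow_natCast 2 t
  calc (n : ℝ) * (n - 1) / 2 * (1 / 2) ^ t ≤ (n : ℝ) ^ 2 / 2 / 2 ^ t := by
        rw [one_div_pow, mul_one_div]
        gcongr
        nlinarith
    _ ≤ (n : ℝ) ^ 2 / 2 / ((n : ℝ) ^ 2 * 2 ^ c) := by gcongr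
    _ = 1 / 2 ^ (c + 1) := by
        rw [rpow_add_one two_ne_zero]
        field_simp

section InverseRiffle

variable {n : ℕ}

def riffleBit (A : Finset (Fin n)) (i : Fin n) : Fin 2 := if i ∈ A then 0 else 1

def riffleStep (A : Finset (Fin n)) (σ : Perm (Fin n)) : Perm (Fin n) :=
  Tuple.sort fun i => toLex (riffleBit A i, σ.symm i)

theorem strictMono_riffleStep (A : Finset (Fin n)) (σ : Perm (Fin n)) :
    StrictMono ((fun i => toLex (riffleBit A i, σ.symm i)) ∘ riffleStep A σ) :=
  Tuple.strictMono_comp_sort fun _ _ h => σ.symm.injective (congrArg Prod.snd (toLex.injective h))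

theorem toLex_riffleBit_lt_toLex_riffleBit_iff {β : Type*} [LT β] (A : Finset (Fin n))
    {i j : Fin n} {b b' : β} :
    toLex (riffleBit A i, b) < toLex (riffleBit A j, b') ↔
      i ∈ A ∧ j ∉ A ∨ (i ∈ A ↔ j ∈ A) ∧ b < b' := by
  unfold riffleBit
  by_cases hi : i ∈ A <;> by_cases hj : j ∈ A <;> simp [hi, hj, Prod.Lex.toLex_lt_toLex]

theorem riffleStep_symm_apply (A : Finset (Fin n)) (σ : Perm (Fin n)) (p : Fin n) :
    ((riffleStep A σ).symm (σ p) : ℕ) = rifflePos A σ p := by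
  rw [Tuple.symm_apply_eq_card_lt_of_strictMono_comp (strictMono_riffleStep A σ),
    card_equiv σ.symm (t := {q | toLex (riffleBit A (σ q), q) < toLex (riffleBit A (σ p), p)})
      fun j => by simp]
  simp only [toLex_riffleBit_lt_toLex_riffleBit_iff, rifflePos]
  by_cases hp : σ p ∈ A
  · simp [hp, and_comm]
  · simp only [hp, iff_false, not_false_eq_true, and_true, if_false]
    rw [filter_or, card_union_of_disjoint (disjoint_filter.2 fun q _ h h' => h'.1 h),
      card_equiv σ (t := A) fun q => by simp]
    exact congrArg (#A + card ·) (filter_congr fun q _ => and_comm)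

theorem riffleKernel_apply (σ τ : Perm (Fin n)) :
    riffleKernel n σ τ = #{A | riffleStep A σ = τ} / Fintype.card (Finset (Fin n)) := by
  rw [riffleKernel, Fintype.card_finset, Fintype.card_fin, Nat.cast_pow, Nat.cast_two]
  congr 3
  refine filter_congr fun A _ => ⟨fun h => ?_, ?_⟩
  · refine Equiv.symm_bijective.injective (Equiv.ext fun i => Fin.ext ?_)
    rw [← σ.apply_symm_apply i, h, riffleStep_symm_apply]
  · rintro rfl p
    exact riffleStep_symm_apply A σ p

def riffleWeight {t : ℕ} (f : Fin t → Finset (Fin n)) (i : Fin n) : Fin (2 ^ t) :=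
  finFunctionFinEquiv fun k => riffleBit (f k) i

def riffleShuffles (σ₀ : Perm (Fin n)) {t : ℕ} (f : Fin t → Finset (Fin n)) : Perm (Fin n) :=
  Fin.foldl t (fun σ k => riffleStep (f k) σ) σ₀

theorem riffleWeight_val_succ {t : ℕ} (f : Fin (t + 1) → Finset (Fin n)) (i : Fin n) :
    (riffleWeight f i : ℕ) =
      riffleWeight (Fin.init f) i + riffleBit (f (Fin.last t)) i * 2 ^ t := by
  simp only [riffleWeight, finFunctionFinEquiv_apply, Fin.sum_univ_castSucc, Fin.init]
  rfl

theorem strictMono_comp_riffleStep {β : Type*} [LinearOrder β] {m m' : ℕ} {w : Fin n → Fin m}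
    {w' : Fin n → Fin m'} {r : Fin n → β} {σ : Perm (Fin n)} (A : Finset (Fin n))
    (hσ : StrictMono ((fun i => toLex (w i, r i)) ∘ σ))
    (hw' : ∀ i, (w' i : ℕ) = w i + riffleBit A i * m) :
    StrictMono ((fun i => toLex (w' i, r i)) ∘ riffleStep A σ) := by
  intro p q hpq
  have h := strictMono_riffleStep A σ hpq
  simp only [Function.comp_apply] at h ⊢
  generalize riffleStep A σ p = i, riffleStep A σ q = j at h ⊢
  have hσij := (hσ.lt_iff_lt (a := σ.symm i) (b := σ.symm j)).symm
  simp only [Function.comp_apply, Equiv.apply_symm_apply] at hσij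
  rw [toLex_riffleBit_lt_toLex_riffleBit_iff, hσij, Prod.Lex.toLex_lt_toLex, Fin.lt_def,
    Fin.ext_iff] at h
  rw [Prod.Lex.toLex_lt_toLex, Fin.lt_def, Fin.ext_iff, hw', hw']
  -- `w < m`, so the new digit `riffleBit A` decides first and the old key `(w, r)` breaks ties
  have := (w i).isLt
  have := (w j).isLt
  by_cases hi : i ∈ A <;> by_cases hj : j ∈ A <;> simp [riffleBit, hi, hj] at h ⊢ <;> omega

theorem strictMono_riffleShuffles (σ₀ : Perm (Fin n)) {t : ℕ} (f : Fin t → Finset (Fin n)) :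
    StrictMono ((fun i => toLex (riffleWeight f i, σ₀.symm i)) ∘ riffleShuffles σ₀ f) := by
  induction t with
  | zero =>
    have hw : ∀ i, riffleWeight f i = 0 := fun i => Fin.ext (by simp [riffleWeight])
    intro p q hpq
    simpa [riffleShuffles, hw, Prod.Lex.toLex_lt_toLex] using hpq
  | succ t ih =>
    rw [riffleShuffles, Fin.foldl_succ_last]
    exact strictMono_comp_riffleStep _ (ih (Fin.init f)) (riffleWeight_val_succ f)

theorem riffleWeight_injective {t : ℕ} :
    Function.Injective (riffleWeight : (Fin t → Finset (Fin n)) → Fin n → Fin (2 ^ t)) := by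
  intro f g h
  funext k
  ext i
  have hbit := congrFun (finFunctionFinEquiv.injective (congrFun h i)) k
  unfold riffleBit at hbit
  split_ifs at hbit <;> simp_all

theorem riffleWeight_bijective {t : ℕ} :
    Function.Bijective (riffleWeight : (Fin t → Finset (Fin n)) → Fin n → Fin (2 ^ t)) :=
  (Fintype.bijective_iff_injective_and_card _).2
    ⟨riffleWeight_injective, by simp [← pow_mul, mul_comm]⟩

theorem card_strictMono_le_card_riffleShuffles_eq (σ₀ x : Perm (Fin n)) (t : ℕ) :
    #{u : Fin n → Fin (2 ^ t) | StrictMono u} ≤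
      #{f : Fin t → Finset (Fin n) | riffleShuffles σ₀ f = x} := by
  calc #{u : Fin n → Fin (2 ^ t) | StrictMono u}
      = #{w : Fin n → Fin (2 ^ t) | StrictMono (w ∘ x)} := (card_strictMono_comp_perm x).symm
    _ = #{f : Fin t → Finset (Fin n) | StrictMono (riffleWeight f ∘ x)} :=
        (card_bijective _ riffleWeight_bijective fun f => by simp).symm
    _ ≤ #{f : Fin t → Finset (Fin n) | riffleShuffles σ₀ f = x} := by
        refine card_le_card (monotone_filter_right _ fun f _ h => ?_)
        have hx : StrictMono ((fun i => toLex (riffleWeight f i, σ₀.symm i)) ∘ x) :=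
          fun p q hpq => Prod.Lex.toLex_lt_toLex.2 (Or.inl (h hpq))
        exact (Tuple.eq_sort_of_strictMono_comp (strictMono_riffleShuffles σ₀ f)).trans
          (Tuple.eq_sort_of_strictMono_comp hx).symm

theorem riffleKernel_pow_apply (t : ℕ) (σ₀ x : Perm (Fin n)) :
    (riffleKernel n ^ t) σ₀ x =
      #{f : Fin t → Finset (Fin n) | riffleShuffles σ₀ f = x} / ((2 : ℝ) ^ n) ^ t := by
  rw [Matrix.pow_apply_eq_card_foldl_div riffleStep riffleKernel_apply, Fintype.card_finset,
    Fintype.card_fin, Nat.cast_pow, Nat.cast_two]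
  rfl

end InverseRiffle

theorem inverse_riffle_separation_general (n : ℕ) (c : ℝ) (t : ℕ)
    (ht : 2 * Real.logb 2 n + c ≤ t) :
    (∀ σ₀ x : Equiv.Perm (Fin n),
      1 - (riffleKernel n ^ t) σ₀ x / ((1 : ℝ) / (Nat.factorial n))
        ≤ (n : ℝ) * (n - 1) / 2 * (1 / 2) ^ t) ∧
    (n : ℝ) * (n - 1) / 2 * (1 / 2) ^ t ≤ 1 / 2 ^ (c + 1) := by
  refine ⟨fun σ₀ x => ?_, choose_two_mul_half_pow_le ht⟩
  have hcount : ((2 ^ t).descFactorial n : ℝ) ≤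
      n.factorial * #{f : Fin t → Finset (Fin n) | riffleShuffles σ₀ f = x} := by
    rw [← Fintype.card_fin (2 ^ t), ← factorial_mul_card_strictMono]
    exact_mod_cast Nat.mul_le_mul_left _ (card_strictMono_le_card_riffleShuffles_eq σ₀ x t)
  have hpow : ((2 : ℝ) ^ n) ^ t = ((2 ^ t : ℕ) : ℝ) ^ n := by
    rw [Nat.cast_pow, Nat.cast_two, ← pow_mul, ← pow_mul, mul_comm]
  calc 1 - (riffleKernel n ^ t) σ₀ x / (1 / n.factorial)
      ≤ 1 - ((2 ^ t).descFactorial n : ℝ) / ((2 ^ t : ℕ) : ℝ) ^ n := by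
        rw [riffleKernel_pow_apply, hpow, one_div, div_inv_eq_mul, div_mul_eq_mul_div, mul_comm]
        gcongr
    _ ≤ n * (n - 1) / 2 / ((2 ^ t : ℕ) : ℝ) :=
        one_sub_descFactorial_div_pow_le _ n (Nat.two_pow_pos t)
    _ = n * (n - 1) / 2 * (1 / 2) ^ t := by
        rw [Nat.cast_pow, Nat.cast_two, one_div_pow, mul_one_div]

/-- For the inverse riffle shuffle with `t ≥ 2 log₂ n + c`, `c ≥ 0`, the separation
distance (w.r.t. the uniform stationary distribution `π ≡ 1/n!`) satisfies
`s(t) ≤ (n(n-1)/2) (1/2)^t ≤ 1/2^{c+1}`. -/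
theorem inverse_riffle_separation (n : ℕ) (hn : 1 ≤ n) (c : ℝ) (hc : 0 ≤ c) (t : ℕ)
    (ht : 2 * Real.logb 2 n + c ≤ t) :
    (∀ σ₀ x : Equiv.Perm (Fin n),
      1 - (riffleKernel n ^ t) σ₀ x / ((1 : ℝ) / (Nat.factorial n))
        ≤ (n : ℝ) * (n - 1) / 2 * (1 / 2) ^ t) ∧
    (n : ℝ) * (n - 1) / 2 * (1 / 2) ^ t ≤ 1 / 2 ^ (c + 1) :=
  inverse_riffle_separation_general n c t ht
end

section
/- Suppose a group G acts on R^n preserving a hyperplane arrangement A, acting transitively on the set of chambers, and the face weights w satisfy w(gF) = w(F) for all g ∈ G and faces F. Then the stationary distribution of the BHR chamber walk is the uniform distribution on the chambers. -/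
open scoped Classical

/-- The coordinatewise product of sign vectors (faces of a hyperplane arrangement). -/
def faceProd {m : ℕ} (F G : Fin m → SignType) : Fin m → SignType :=
  fun i => if F i ≠ 0 then F i else G i

/-- The chambers: faces of the arrangement all of whose coordinates are nonzero. -/
abbrev Chamber (m : ℕ) (Faces : Finset (Fin m → SignType)) :=
  {x : Fin m → SignType // x ∈ Faces ∧ ∀ i, x i ≠ 0}

/-- Transition matrix of the BHR walk on chambers. -/
noncomputable def bhrKernel (m : ℕ) (Faces : Finset (Fin m → SignType))
    (w : (Fin m → SignType) → ℝ) :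
    Matrix (Chamber m Faces) (Chamber m Faces) ℝ :=
  fun C C' => ∑ F ∈ Faces, if faceProd F C.1 = C'.1 then w F else 0

/-!
Invariance of `w` makes the transition matrix `K` invariant under the induced permutation of
the chambers, so by transitivity all its column sums agree; as its rows sum to `1`, `K` is doubly
stochastic and the uniform distribution is stationary. Stationary distributions are unique:
applying one separating face per hyperplane sends every chamber to one and the same chamber `P`,
so the column `P` of `K ^ m` is bounded below by some `δ > 0`, and then (Doeblin) `K ^ m`
contracts the `ℓ¹` norm of zero-sum vectors by the factor `1 - δ`.
-/

open Finset Matrix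

namespace Matrix

variable {n R : Type*} [Fintype n] [DecidableEq n]

theorem vecMul_pow_eq_self [Semiring R] {M : Matrix n n R} {v : n → R} (hv : v ᵥ* M = v)
    (k : ℕ) : v ᵥ* M ^ k = v := by
  induction k with
  | zero => simp
  | succ k ih => rw [pow_succ, ← vecMul_vecMul, ih, hv]

theorem mem_doublyStochastic_of_sum_col_eq [CommRing R] [LinearOrder R]
    [IsStrictOrderedRing R] {M : Matrix n n R} (hM : M ∈ rowStochastic R n)
    (hcol : ∀ j j', ∑ i, M i j = ∑ i, M i j') : M ∈ doublyStochastic R n := by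
  refine mem_doublyStochastic_iff_sum.2
    ⟨fun _ _ => nonneg_of_mem_rowStochastic hM, sum_row_of_mem_rowStochastic hM, fun j => ?_⟩
  have : Nonempty n := ⟨j⟩
  have htotal : (Fintype.card n : R) * ∑ i, M i j = Fintype.card n := calc
    _ = ∑ j', ∑ i, M i j' := by simp [hcol _ j]
    _ = ∑ i, ∑ j', M i j' := sum_comm
    _ = Fintype.card n := by simp [sum_row_of_mem_rowStochastic hM]
  exact (mul_eq_left₀ (Nat.cast_ne_zero.2 Fintype.card_ne_zero)).1 htotal

theorem eq_zero_of_vecMul_eq_self_of_sum_eq_zero [CommRing R] [LinearOrder R]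
    [IsStrictOrderedRing R] {M : Matrix n n R} (hM : M ∈ rowStochastic R n) {δ : R}
    (hδ : 0 < δ) {p : n} (hp : ∀ i, δ ≤ M i p) {μ : n → R} (hμ : μ ᵥ* M = μ)
    (hsum : ∑ i, μ i = 0) : μ = 0 := by
  set N : Matrix n n R := M - of fun _ j => if j = p then δ else 0
  have hN_nonneg : ∀ i j, 0 ≤ N i j := by
    intro i j
    by_cases h : j = p
    · subst h; simpa [N] using hp i
    · simpa [N, h] using nonneg_of_mem_rowStochastic hM
  have hN_row : ∀ i, ∑ j, N i j = 1 - δ := by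
    intro i
    simp [N, sum_sub_distrib, sum_row_of_mem_rowStochastic hM]
  have hμN : μ ᵥ* N = μ := by
    rw [vecMul_sub, hμ, sub_eq_self]
    ext j
    simp [vecMul, dotProduct, ← sum_mul, hsum]
  have hcontract : ∑ j, |μ j| ≤ (1 - δ) * ∑ j, |μ j| := calc
    ∑ j, |μ j| = ∑ j, |∑ i, μ i * N i j| := by
      conv_lhs => rw [← hμN]
      rfl
    _ ≤ ∑ j, ∑ i, |μ i| * N i j := sum_le_sum fun j _ =>
      (abs_sum_le_sum_abs _ _).trans_eq
        (sum_congr rfl fun i _ => by rw [abs_mul, abs_of_nonneg (hN_nonneg i j)])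
    _ = ∑ i, |μ i| * ∑ j, N i j := by
      rw [sum_comm]
      simp_rw [mul_sum]
    _ = (1 - δ) * ∑ j, |μ j| := by simp_rw [hN_row, ← sum_mul, mul_comm]
  have hnorm : ∑ j, |μ j| = 0 := by
    nlinarith [sum_nonneg fun j (_ : j ∈ univ) => abs_nonneg (μ j)]
  ext j
  exact abs_eq_zero.mp
    ((sum_eq_zero_iff_of_nonneg fun j _ => abs_nonneg _).mp hnorm j (mem_univ j))

theorem eq_of_vecMul_eq_self_of_le_pow_apply [CommRing R] [LinearOrder R]
    [IsStrictOrderedRing R] {M : Matrix n n R} (hM : M ∈ rowStochastic R n) {k : ℕ} {δ : R}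
    (hδ : 0 < δ) {p : n} (hp : ∀ i, δ ≤ (M ^ k) i p) {π ν : n → R} (hπ : π ᵥ* M = π)
    (hν : ν ᵥ* M = ν) (hsum : ∑ i, π i = ∑ i, ν i) : π = ν :=
  sub_eq_zero.mp <| eq_zero_of_vecMul_eq_self_of_sum_eq_zero (pow_mem hM k) hδ hp
    (by rw [sub_vecMul, vecMul_pow_eq_self hπ, vecMul_pow_eq_self hν])
    (by simp [sum_sub_distrib, hsum])

end Matrix

section Arrangement

variable {m : ℕ} {Faces : Finset (Fin m → SignType)}

theorem faceProd_apply_ne_zero (F : Fin m → SignType) {x : Fin m → SignType} {i : Fin m}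
    (hx : x i ≠ 0) : faceProd F x i ≠ 0 := by
  by_cases hF : F i = 0 <;> simp [faceProd, hF, hx]

theorem foldr_faceProd_apply_ne_zero (L : List (Fin m → SignType)) {x : Fin m → SignType}
    {i : Fin m} (hx : x i ≠ 0) : L.foldr faceProd x i ≠ 0 := by
  induction L with
  | nil => exact hx
  | cons F t ih => exact faceProd_apply_ne_zero F ih

theorem foldr_faceProd_mem (hclosed : ∀ F ∈ Faces, ∀ G ∈ Faces, faceProd F G ∈ Faces)
    {L : List (Fin m → SignType)} (hL : ∀ F ∈ L, F ∈ Faces) {x : Fin m → SignType}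
    (hx : x ∈ Faces) : L.foldr faceProd x ∈ Faces := by
  induction L with
  | nil => exact hx
  | cons F t ih =>
    exact hclosed F (hL F List.mem_cons_self) _
      (ih fun F' hF' => hL F' (List.mem_cons_of_mem F hF'))

theorem foldr_faceProd_apply_eq {L : List (Fin m → SignType)} {i : Fin m}
    (h : ∃ F ∈ L, F i ≠ 0) (x y : Fin m → SignType) :
    L.foldr faceProd x i = L.foldr faceProd y i := by
  induction L with
  | nil => simp at h
  | cons F t ih =>
    by_cases hF : F i = 0
    · have ht : ∃ F ∈ t, F i ≠ 0 := by simpa [hF] using h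
      simp [faceProd, hF, ih ht]
    · simp [faceProd, hF]

variable {w : (Fin m → SignType) → ℝ}

theorem bhrKernel_nonneg (hw0 : ∀ F, 0 ≤ w F) (C D : Chamber m Faces) :
    0 ≤ bhrKernel m Faces w C D :=
  sum_nonneg fun F _ => by split_ifs <;> simp [hw0 F]

theorem le_bhrKernel (hw0 : ∀ F, 0 ≤ w F) {F : Fin m → SignType} (hF : F ∈ Faces)
    {C D : Chamber m Faces} (h : faceProd F C.1 = D.1) : w F ≤ bhrKernel m Faces w C D := by
  have := single_le_sum (f := fun F => if faceProd F C.1 = D.1 then w F else 0)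
    (fun F _ => by split_ifs <;> simp [hw0 F]) hF
  simpa [bhrKernel, h] using this

theorem bhrKernel_mem_rowStochastic
    (hclosed : ∀ F ∈ Faces, ∀ G ∈ Faces, faceProd F G ∈ Faces) (hw0 : ∀ F, 0 ≤ w F)
    (hsum : ∑ F ∈ Faces, w F = 1) :
    bhrKernel m Faces w ∈ rowStochastic ℝ (Chamber m Faces) := by
  refine mem_rowStochastic_iff_sum.2 ⟨bhrKernel_nonneg hw0, fun C => ?_⟩
  simp only [bhrKernel]
  rw [sum_comm, ← hsum]
  refine sum_congr rfl fun F hF => ?_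
  let FC : Chamber m Faces := ⟨faceProd F C.1, hclosed F hF C.1 C.2.1,
    fun i => faceProd_apply_ne_zero F (C.2.2 i)⟩
  simpa [Subtype.ext_iff, eq_comm] using sum_ite_eq univ FC fun _ => w F

theorem prod_map_le_bhrKernel_pow_apply
    (hclosed : ∀ F ∈ Faces, ∀ G ∈ Faces, faceProd F G ∈ Faces) (hw0 : ∀ F, 0 ≤ w F)
    {L : List (Fin m → SignType)} (hL : ∀ F ∈ L, F ∈ Faces) {C D : Chamber m Faces}
    (hD : L.foldr faceProd C.1 = D.1) :
    (L.map w).prod ≤ (bhrKernel m Faces w ^ L.length) C D := by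
  have hK := bhrKernel_nonneg (Faces := Faces) hw0
  induction L generalizing D with
  | nil =>
    obtain rfl : C = D := Subtype.ext hD
    simp
  | cons F t ih =>
    have ht : ∀ F' ∈ t, F' ∈ Faces := fun F' hF' => hL F' (List.mem_cons_of_mem F hF')
    let E : Chamber m Faces := ⟨t.foldr faceProd C.1, foldr_faceProd_mem hclosed ht C.2.1,
      fun i => foldr_faceProd_apply_ne_zero t (C.2.2 i)⟩
    calc ((F :: t).map w).prod = (t.map w).prod * w F := by simp [mul_comm]
      _ ≤ (bhrKernel m Faces w ^ t.length) C E * bhrKernel m Faces w E D :=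
        mul_le_mul (ih ht rfl) (le_bhrKernel hw0 (hL F List.mem_cons_self) hD) (hw0 F)
          (pow_apply_nonneg hK _ C E)
      _ ≤ (bhrKernel m Faces w ^ (F :: t).length) C D := by
        rw [List.length_cons, pow_succ, Matrix.mul_apply]
        exact single_le_sum (fun X _ => mul_nonneg (pow_apply_nonneg hK _ C X) (hK X D))
          (mem_univ E)

theorem exists_le_bhrKernel_pow_apply
    (hclosed : ∀ F ∈ Faces, ∀ G ∈ Faces, faceProd F G ∈ Faces) (hw0 : ∀ F, 0 ≤ w F)
    (hsupp : ∀ F, 0 < w F → F ∈ Faces) (hsep : ∀ i : Fin m, ∃ F, 0 < w F ∧ F i ≠ 0)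
    (C₀ : Chamber m Faces) :
    ∃ δ > 0, ∃ P : Chamber m Faces, ∀ C, δ ≤ (bhrKernel m Faces w ^ m) C P := by
  choose F hFpos hFsep using hsep
  have hL : ∀ G ∈ List.ofFn F, G ∈ Faces := by
    simpa [List.mem_ofFn] using fun i => hsupp _ (hFpos i)
  have hcover : ∀ i, ∃ G ∈ List.ofFn F, G i ≠ 0 :=
    fun i => ⟨F i, List.mem_ofFn.2 ⟨i, rfl⟩, hFsep i⟩
  let P : Chamber m Faces := ⟨(List.ofFn F).foldr faceProd C₀.1,
    foldr_faceProd_mem hclosed hL C₀.2.1, fun i => foldr_faceProd_apply_ne_zero _ (C₀.2.2 i)⟩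
  refine ⟨∏ i, w (F i), prod_pos fun i _ => hFpos i, P, fun C => ?_⟩
  simpa [List.prod_ofFn] using
    prod_map_le_bhrKernel_pow_apply hclosed hw0 hL (C := C) (D := P)
      (funext fun i => foldr_faceProd_apply_eq (hcover i) _ _)

end Arrangement

section Symmetry

variable {m : ℕ} {Faces : Finset (Fin m → SignType)} {w : (Fin m → SignType) → ℝ}
  {G : Type*} [Group G] [MulAction G (Fin m → SignType)]

def chamberPerm (hact_faces : ∀ (g : G) (F : Fin m → SignType), F ∈ Faces → g • F ∈ Faces)
    (hact_ch : ∀ (g : G) (F : Fin m → SignType), (∀ i, F i ≠ 0) → ∀ i, (g • F) i ≠ 0)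
    (g : G) : Equiv.Perm (Chamber m Faces) where
  toFun C := ⟨g • C.1, hact_faces g _ C.2.1, hact_ch g _ C.2.2⟩
  invFun C := ⟨g⁻¹ • C.1, hact_faces g⁻¹ _ C.2.1, hact_ch g⁻¹ _ C.2.2⟩
  left_inv C := Subtype.ext (inv_smul_smul g C.1)
  right_inv C := Subtype.ext (smul_inv_smul g C.1)

theorem bhrKernel_chamberPerm
    (hact_faces : ∀ (g : G) (F : Fin m → SignType), F ∈ Faces → g • F ∈ Faces)
    (hact_ch : ∀ (g : G) (F : Fin m → SignType), (∀ i, F i ≠ 0) → ∀ i, (g • F) i ≠ 0)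
    (hact_prod : ∀ (g : G) (F F' : Fin m → SignType),
      g • faceProd F F' = faceProd (g • F) (g • F'))
    (hinv : ∀ (g : G) (F : Fin m → SignType), w (g • F) = w F) (g : G)
    (C D : Chamber m Faces) :
    bhrKernel m Faces w (chamberPerm hact_faces hact_ch g C)
      (chamberPerm hact_faces hact_ch g D) = bhrKernel m Faces w C D := by
  symm
  refine sum_nbij' (g • ·) (g⁻¹ • ·) (fun F hF => hact_faces g F hF)
    (fun F hF => hact_faces g⁻¹ F hF) (fun F _ => inv_smul_smul g F)
    (fun F _ => smul_inv_smul g F) fun F _ => ?_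
  simp [chamberPerm, ← hact_prod, hinv]

theorem sum_bhrKernel_col_eq
    (hact_faces : ∀ (g : G) (F : Fin m → SignType), F ∈ Faces → g • F ∈ Faces)
    (hact_ch : ∀ (g : G) (F : Fin m → SignType), (∀ i, F i ≠ 0) → ∀ i, (g • F) i ≠ 0)
    (hact_prod : ∀ (g : G) (F F' : Fin m → SignType),
      g • faceProd F F' = faceProd (g • F) (g • F'))
    (hinv : ∀ (g : G) (F : Fin m → SignType), w (g • F) = w F)
    (htrans : ∀ C C' : Chamber m Faces, ∃ g : G, g • C.1 = C'.1)
    (D D' : Chamber m Faces) :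
    ∑ C, bhrKernel m Faces w C D = ∑ C, bhrKernel m Faces w C D' := by
  obtain ⟨g, hg⟩ := htrans D D'
  set σ := chamberPerm hact_faces hact_ch g
  calc ∑ C, bhrKernel m Faces w C D = ∑ C, bhrKernel m Faces w (σ C) (σ D) :=
        sum_congr rfl fun C _ =>
          (bhrKernel_chamberPerm hact_faces hact_ch hact_prod hinv g C D).symm
    _ = ∑ C, bhrKernel m Faces w C D' := by
        rw [Equiv.sum_comp σ (fun C => bhrKernel m Faces w C (σ D)),
          (Subtype.ext hg : σ D = D')]

end Symmetry

theorem bhr_symmetric_stationary_uniform_general (m : ℕ) (Faces : Finset (Fin m → SignType))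
    (hclosed : ∀ F ∈ Faces, ∀ G ∈ Faces, faceProd F G ∈ Faces)
    (w : (Fin m → SignType) → ℝ) (hw0 : ∀ F, 0 ≤ w F)
    (hsupp : ∀ F, 0 < w F → F ∈ Faces) (hsum : ∑ F ∈ Faces, w F = 1)
    (hsep : ∀ i : Fin m, ∃ F, 0 < w F ∧ F i ≠ 0)
    (G : Type*) [Group G] [MulAction G (Fin m → SignType)]
    (hact_faces : ∀ (g : G) (F : Fin m → SignType), F ∈ Faces → g • F ∈ Faces)
    (hact_prod : ∀ (g : G) (F F' : Fin m → SignType),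
      g • faceProd F F' = faceProd (g • F) (g • F'))
    (hact_ch : ∀ (g : G) (F : Fin m → SignType), (∀ i, (g • F) i ≠ 0) ↔ ∀ i, F i ≠ 0)
    (htrans : ∀ C C' : Chamber m Faces, ∃ g : G, g • C.1 = C'.1)
    (hinv : ∀ (g : G) (F : Fin m → SignType), w (g • F) = w F)
    (π : Chamber m Faces → ℝ) (hπsum : ∑ C, π C = 1)
    (hstat : ∀ C, ∑ C', π C' * bhrKernel m Faces w C' C = π C) :
    ∀ C : Chamber m Faces, π C = 1 / (Fintype.card (Chamber m Faces)) := by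
  intro C₀
  have : Nonempty (Chamber m Faces) := ⟨C₀⟩
  have hK := bhrKernel_mem_rowStochastic hclosed hw0 hsum
  have hK_doubly : bhrKernel m Faces w ∈ doublyStochastic ℝ (Chamber m Faces) :=
    mem_doublyStochastic_of_sum_col_eq hK
      (sum_bhrKernel_col_eq hact_faces (fun g F => (hact_ch g F).2) hact_prod hinv htrans)
  obtain ⟨δ, hδ, P, hP⟩ := exists_le_bhrKernel_pow_apply hclosed hw0 hsupp hsep C₀
  set u : Chamber m Faces → ℝ := (1 / Fintype.card (Chamber m Faces) : ℝ) • 1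
  have hu : u ᵥ* bhrKernel m Faces w = u := by
    rw [smul_vecMul, one_vecMul_of_mem_doublyStochastic hK_doubly]
  have hπu : π = u :=
    eq_of_vecMul_eq_self_of_le_pow_apply hK hδ hP (funext hstat) hu (by simp [u, hπsum])
  simp [hπu, u]

/-- If a group `G` acts on the arrangement (preserving the set of faces, the face product
and chambers), transitively on the chambers, and the face weights are `G`-invariant, then
the stationary distribution of the BHR chamber walk is uniform on the chambers. -/
theorem bhr_symmetric_stationary_uniform (m : ℕ) (Faces : Finset (Fin m → SignType))
    (hclosed : ∀ F ∈ Faces, ∀ G ∈ Faces, faceProd F G ∈ Faces)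
    (w : (Fin m → SignType) → ℝ) (hw0 : ∀ F, 0 ≤ w F)
    (hsupp : ∀ F, 0 < w F → F ∈ Faces) (hsum : ∑ F ∈ Faces, w F = 1)
    (hsep : ∀ i : Fin m, ∃ F, 0 < w F ∧ F i ≠ 0)
    (G : Type*) [Group G] [MulAction G (Fin m → SignType)]
    (hact_faces : ∀ (g : G) (F : Fin m → SignType), F ∈ Faces → g • F ∈ Faces)
    (hact_prod : ∀ (g : G) (F F' : Fin m → SignType),
      g • faceProd F F' = faceProd (g • F) (g • F'))
    (hact_ch : ∀ (g : G) (F : Fin m → SignType), (∀ i, (g • F) i ≠ 0) ↔ ∀ i, F i ≠ 0)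
    (htrans : ∀ C C' : Chamber m Faces, ∃ g : G, g • C.1 = C'.1)
    (hinv : ∀ (g : G) (F : Fin m → SignType), w (g • F) = w F)
    (π : Chamber m Faces → ℝ) (hπ0 : ∀ C, 0 ≤ π C) (hπsum : ∑ C, π C = 1)
    (hstat : ∀ C, ∑ C', π C' * bhrKernel m Faces w C' C = π C) :
    ∀ C : Chamber m Faces, π C = 1 / (Fintype.card (Chamber m Faces)) :=
  bhr_symmetric_stationary_uniform_general m Faces hclosed w hw0 hsupp hsum hsep G hact_faces
    hact_prod hact_ch htrans hinv π hπsum hstat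
end

section
/- Under the symmetry conditions (a group G preserving the arrangement, transitive on chambers, with G-invariant face weights), the first time T_3 that the product F^t F^{t-1} ⋯ F^1 of the sampled faces is a chamber is a strong stationary time for the BHR walk, and consequently s(t) ≤ Σ_{i=1}^m (1 − Σ_{F ⊄ H_i} w(F))^t, summing over the m hyperplanes H_i of the arrangement. -/
open MeasureTheory
open scoped ENNReal Classical

instance (m : ℕ) : MeasurableSpace (Fin m → SignType) := ⊤

/-!
Let `P t = F^t ⋯ F^1` be the product of the sampled faces. Then `X t = P t X₀`, so `X t = P t`
as soon as `P t` is a chamber, whatever the starting point. The law of `P t` is a sum over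
`t`-tuples of faces of products of weights; the action of `G` commutes with the face product and
preserves the weights, so this law is `G`-invariant, and as `G` is transitive on chambers, `X t`
is uniform on the event that `P t` is a chamber. Hence
`s(t) ≤ μ (P t is not a chamber) ≤ ∑ᵢ μ (P t ⊆ Hᵢ)`, and `P t ⊆ Hᵢ` means that the `t`
independent faces all lie in `Hᵢ`, which has probability `(1 - ∑_{F ⊄ Hᵢ} w F) ^ t`.
-/

open ProbabilityTheory Finset

instance (m : ℕ) : DiscreteMeasurableSpace (Fin m → SignType) := ⟨fun _ => trivial⟩

section FaceSemigroup

variable {m : ℕ}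

lemma faceProd_apply_eq_zero {F F' : Fin m → SignType} {i : Fin m} :
    faceProd F F' i = 0 ↔ F i = 0 ∧ F' i = 0 := by
  by_cases hF : F i = 0 <;> simp [faceProd, hF]

lemma faceProd_assoc (F F' F'' : Fin m → SignType) :
    faceProd (faceProd F F') F'' = faceProd F (faceProd F' F'') := by
  funext i
  by_cases hF : F i = 0 <;> by_cases hF' : F' i = 0 <;> simp [faceProd, hF, hF']

@[simp]
lemma zero_faceProd (F : Fin m → SignType) : faceProd 0 F = F := by
  funext i; simp [faceProd]

@[simp]
lemma faceProd_zero (F : Fin m → SignType) : faceProd F 0 = F := by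
  funext i; by_cases hF : F i = 0 <;> simp [faceProd, hF]

lemma faceProd_eq_left {F : Fin m → SignType} (hF : ∀ i, F i ≠ 0) (F' : Fin m → SignType) :
    faceProd F F' = F := by
  funext i; simp [faceProd, hF i]

/-- `faceProdTuple f = f (t-1) ⋯ f 1 f 0`, the empty product being the unit `0`. -/
def faceProdTuple : {t : ℕ} → (Fin t → Fin m → SignType) → Fin m → SignType
  | 0, _ => 0
  | t + 1, f => faceProd (f (Fin.last t)) (faceProdTuple fun s : Fin t => f s.castSucc)

lemma faceProdTuple_apply_eq_zero {t : ℕ} (f : Fin t → Fin m → SignType) (i : Fin m) :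
    faceProdTuple f i = 0 ↔ ∀ s, f s i = 0 := by
  induction t with
  | zero => simp [faceProdTuple]
  | succ t ih =>
    rw [faceProdTuple, faceProd_apply_eq_zero, ih, Fin.forall_fin_succ', and_comm]

lemma eq_faceProdTuple_of_succ {d P : ℕ → Fin m → SignType} (h0 : P 0 = 0)
    (hsucc : ∀ t, P (t + 1) = faceProd (d t) (P t)) (t : ℕ) :
    P t = faceProdTuple fun s : Fin t => d s := by
  induction t with
  | zero => exact h0
  | succ t ih => rw [hsucc, ih]; rfl

lemma eq_faceProd_of_succ {d P X : ℕ → Fin m → SignType} (hP0 : P 0 = 0)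
    (hP : ∀ t, P (t + 1) = faceProd (d t) (P t)) (hX : ∀ t, X (t + 1) = faceProd (d t) (X t))
    (t : ℕ) : X t = faceProd (P t) (X 0) := by
  induction t with
  | zero => rw [hP0, zero_faceProd]
  | succ t ih => rw [hX, hP, ih, faceProd_assoc]

lemma faceProd_faceProdTuple_mem {Faces : Finset (Fin m → SignType)}
    (hclosed : ∀ F ∈ Faces, ∀ G ∈ Faces, faceProd F G ∈ Faces) {t : ℕ}
    {f : Fin t → Fin m → SignType} (hf : ∀ s, f s ∈ Faces) {c : Fin m → SignType}
    (hc : c ∈ Faces) : faceProd (faceProdTuple f) c ∈ Faces := by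
  induction t with
  | zero => simpa [faceProdTuple] using hc
  | succ t ih =>
    rw [faceProdTuple, faceProd_assoc]
    exact hclosed _ (hf _) _ (ih fun s => hf _)

end FaceSemigroup

section Equivariance

variable {m : ℕ} {G : Type*} [Group G] [MulAction G (Fin m → SignType)]

lemma smul_zero_of_smul_faceProd
    (hact : ∀ (g : G) (F F' : Fin m → SignType), g • faceProd F F' = faceProd (g • F) (g • F'))
    (g : G) : g • (0 : Fin m → SignType) = 0 := by
  calc g • (0 : Fin m → SignType)
      = faceProd (g • 0) (g • g⁻¹ • 0) := by rw [smul_inv_smul, faceProd_zero]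
    _ = g • g⁻¹ • 0 := by rw [← hact, zero_faceProd]
    _ = 0 := smul_inv_smul g 0

lemma faceProdTuple_smul
    (hact : ∀ (g : G) (F F' : Fin m → SignType), g • faceProd F F' = faceProd (g • F) (g • F'))
    (g : G) {t : ℕ} (f : Fin t → Fin m → SignType) :
    faceProdTuple (fun s => g • f s) = g • faceProdTuple f := by
  induction t with
  | zero => exact (smul_zero_of_smul_faceProd hact g).symm
  | succ t ih => simp only [faceProdTuple, ih, hact]

lemma sum_prod_faceProdTuple_eq_smul
    (hact : ∀ (g : G) (F F' : Fin m → SignType), g • faceProd F F' = faceProd (g • F) (g • F'))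
    {W : (Fin m → SignType) → ℝ≥0∞} (hW : ∀ (g : G) F, W (g • F) = W F)
    (g : G) (t : ℕ) (x : Fin m → SignType) :
    ∑ f with faceProdTuple f = x, ∏ s : Fin t, W (f s)
      = ∑ f with faceProdTuple f = g • x, ∏ s : Fin t, W (f s) :=
  Finset.sum_equiv (Equiv.piCongrRight fun _ => MulAction.toPerm g)
    (fun f => by
      simp only [mem_filter_univ]
      change _ ↔ faceProdTuple (fun s => g • f s) = g • x
      rw [faceProdTuple_smul hact, smul_left_cancel_iff])
    (fun f _ => by simp [hW])

end Equivariance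

section IndependentTuple

variable {Ω α : Type*} [MeasurableSpace Ω] {μ : Measure Ω} [MeasurableSpace α]
  {D : ℕ → Ω → α}

lemma ProbabilityTheory.iIndepFun.measure_forall_fin_mem (hD : iIndepFun D μ) {t : ℕ}
    {A : Fin t → Set α} (hA : ∀ s, MeasurableSet (A s)) :
    μ {ω | ∀ s : Fin t, D s ω ∈ A s} = ∏ s : Fin t, μ (D s ⁻¹' A s) := by
  rw [← (hD.precomp Fin.val_injective).meas_iInter fun s => ⟨A s, hA s, rfl⟩]
  congr 1
  ext ω
  simp

lemma ProbabilityTheory.iIndepFun.measure_tuple_mem [MeasurableSingletonClass α]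
    (hD : iIndepFun D μ) (hmeas : ∀ t, Measurable (D t)) {t : ℕ} (S : Finset (Fin t → α)) :
    μ {ω | (fun s : Fin t => D s ω) ∈ S} = ∑ f ∈ S, ∏ s : Fin t, μ (D s ⁻¹' {f s}) := by
  have hfiber (f : Fin t → α) :
      (fun ω (s : Fin t) => D s ω) ⁻¹' {f} = {ω | ∀ s : Fin t, D s ω ∈ ({f s} : Set α)} := by
    ext ω
    simp [funext_iff]
  change μ ((fun ω (s : Fin t) => D s ω) ⁻¹' ↑S) = _
  rw [← sum_measure_preimage_singleton S fun f _ => ?_]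
  · simp_rw [hfiber, hD.measure_forall_fin_mem fun _ => measurableSet_singleton _]
  · rw [hfiber, Set.ofPred_forall]
    exact MeasurableSet.iInter fun s => hmeas s (measurableSet_singleton _)

lemma measure_preimage_finset_eq_ofReal_sum [MeasurableSingletonClass α] {X : Ω → α}
    (hX : Measurable X) {w : α → ℝ} (hw0 : ∀ a, 0 ≤ w a)
    (hlaw : ∀ a, μ {ω | X ω = a} = ENNReal.ofReal (w a)) (S : Finset α) :
    μ (X ⁻¹' S) = ENNReal.ofReal (∑ a ∈ S, w a) := by
  rw [← sum_measure_preimage_singleton S fun a _ => hX (measurableSet_singleton a),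
    ENNReal.ofReal_sum_of_nonneg fun a _ => hw0 a]
  exact Finset.sum_congr rfl fun a _ => hlaw a

end IndependentTuple

section Weights

variable {α : Type*} {w : α → ℝ} {S : Finset α}

lemma eq_zero_of_notMem_of_pos_mem (hw0 : ∀ a, 0 ≤ w a) (hsupp : ∀ a, 0 < w a → a ∈ S)
    {a : α} (ha : a ∉ S) : w a = 0 :=
  le_antisymm (not_lt.1 fun h => ha (hsupp a h)) (hw0 a)

lemma sum_filter_le_one (hw0 : ∀ a, 0 ≤ w a) (hsum : ∑ a ∈ S, w a = 1) (p : α → Prop)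
    [DecidablePred p] : ∑ a ∈ S with p a, w a ≤ 1 :=
  hsum ▸ sum_le_sum_of_subset_of_nonneg (filter_subset p S) fun a _ _ => hw0 a

lemma sum_filter_not_eq_one_sub [Fintype α] (hw0 : ∀ a, 0 ≤ w a)
    (hsupp : ∀ a, 0 < w a → a ∈ S) (hsum : ∑ a ∈ S, w a = 1) (p : α → Prop) [DecidablePred p] :
    ∑ a with ¬ p a, w a = 1 - ∑ a ∈ S with p a, w a := by
  have hzero : ∀ a ∉ S, w a = 0 := fun a => eq_zero_of_notMem_of_pos_mem hw0 hsupp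
  have htotal : ∑ a, w a = 1 := by
    rw [← hsum, Finset.sum_subset (subset_univ S) fun a _ ha => hzero a ha]
  have hp : ∑ a with p a, w a = ∑ a ∈ S with p a, w a := by
    rw [sum_filter, sum_filter]
    exact (sum_subset (subset_univ S) fun a _ ha => by simp [hzero a ha]).symm
  rw [← hp, ← htotal, ← sum_filter_add_sum_filter_not univ p]
  ring

end Weights

namespace BHR

variable {m : ℕ} {Faces : Finset (Fin m → SignType)} {w : (Fin m → SignType) → ℝ}
  {Ω : Type*} {D P : ℕ → Ω → Fin m → SignType}

lemma eq_faceProdTuple (hP0 : P 0 = fun _ _ => 0)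
    (hPstep : ∀ t ω, P (t + 1) ω = faceProd (D t ω) (P t ω)) (t : ℕ) (ω : Ω) :
    P t ω = faceProdTuple fun s : Fin t => D s ω :=
  eq_faceProdTuple_of_succ (P := (P · ω)) (congrFun hP0 ω) (hPstep · ω) t

lemma setOf_eq_and_forall_ne_zero {X : ℕ → Ω → Fin m → SignType} (hP0 : P 0 = fun _ _ => 0)
    (hPstep : ∀ t ω, P (t + 1) ω = faceProd (D t ω) (P t ω))
    (hXstep : ∀ t ω, X (t + 1) ω = faceProd (D t ω) (X t ω)) (t : ℕ) {C : Fin m → SignType}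
    (hC : ∀ i, C i ≠ 0) :
    {ω | X t ω = C ∧ ∀ i, P t ω i ≠ 0} = {ω | P t ω = C} := by
  ext ω
  rw [Set.mem_ofPred_eq, Set.mem_ofPred_eq, eq_faceProd_of_succ (P := (P · ω)) (X := (X · ω))
    (congrFun hP0 ω) (hPstep · ω) (hXstep · ω) t]
  constructor
  · rintro ⟨hXC, hP⟩
    rwa [faceProd_eq_left hP] at hXC
  · intro hP
    exact ⟨by rw [hP, faceProd_eq_left hC], hP ▸ hC⟩

variable [MeasurableSpace Ω] {μ : Measure Ω}

lemma ae_forall_mem_faces (hw0 : ∀ F, 0 ≤ w F) (hsupp : ∀ F, 0 < w F → F ∈ Faces)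
    (hmeas : ∀ t, Measurable (D t))
    (hdist : ∀ t F, μ {ω | D t ω = F} = ENNReal.ofReal (w F)) :
    ∀ᵐ ω ∂μ, ∀ t, D t ω ∈ Faces := by
  refine ae_all_iff.2 fun t => ae_iff.2 ?_
  rw [show {ω | ¬ D t ω ∈ Faces} = D t ⁻¹' ↑Facesᶜ by ext; simp,
    measure_preimage_finset_eq_ofReal_sum (hmeas t) hw0 (hdist t), Finset.sum_eq_zero,
    ENNReal.ofReal_zero]
  exact fun F hF => eq_zero_of_notMem_of_pos_mem hw0 hsupp (mem_compl.1 hF)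

lemma measurable_of_succ (hmeas : ∀ t, Measurable (D t)) (hP0 : P 0 = fun _ _ => 0)
    (hPstep : ∀ t ω, P (t + 1) ω = faceProd (D t ω) (P t ω)) (t : ℕ) : Measurable (P t) := by
  induction t with
  | zero => rw [hP0]; exact measurable_const
  | succ t ih =>
    rw [funext (hPstep t)]
    exact (measurable_of_countable fun p : _ × _ => faceProd p.1 p.2).comp
      ((hmeas t).prodMk ih)

lemma measure_eq_sum_faceProdTuple (hindep : iIndepFun D μ) (hmeas : ∀ t, Measurable (D t))
    (hdist : ∀ t F, μ {ω | D t ω = F} = ENNReal.ofReal (w F)) (hP0 : P 0 = fun _ _ => 0)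
    (hPstep : ∀ t ω, P (t + 1) ω = faceProd (D t ω) (P t ω)) (t : ℕ) (x : Fin m → SignType) :
    μ {ω | P t ω = x}
      = ∑ f with faceProdTuple f = x, ∏ s : Fin t, ENNReal.ofReal (w (f s)) := by
  calc μ {ω | P t ω = x}
      = μ {ω | (fun s : Fin t => D s ω) ∈ univ.filter (faceProdTuple · = x)} := by
        simp [eq_faceProdTuple hP0 hPstep]
    _ = _ := hindep.measure_tuple_mem hmeas _
    _ = _ := sum_congr rfl fun f _ => prod_congr rfl fun s _ => hdist s (f s)

lemma measure_smul_eq {G : Type*} [Group G] [MulAction G (Fin m → SignType)]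
    (hact : ∀ (g : G) (F F' : Fin m → SignType), g • faceProd F F' = faceProd (g • F) (g • F'))
    (hinv : ∀ (g : G) F, w (g • F) = w F) (hindep : iIndepFun D μ)
    (hmeas : ∀ t, Measurable (D t))
    (hdist : ∀ t F, μ {ω | D t ω = F} = ENNReal.ofReal (w F)) (hP0 : P 0 = fun _ _ => 0)
    (hPstep : ∀ t ω, P (t + 1) ω = faceProd (D t ω) (P t ω)) (g : G) (t : ℕ)
    (x : Fin m → SignType) :
    μ {ω | P t ω = g • x} = μ {ω | P t ω = x} := by
  simp only [measure_eq_sum_faceProdTuple hindep hmeas hdist hP0 hPstep]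
  exact (sum_prod_faceProdTuple_eq_smul (W := fun F => ENNReal.ofReal (w F)) hact
    (fun g F => congrArg _ (hinv g F)) g t x).symm

lemma measure_forall_ne_zero_eq_sum_chamber {Y : Ω → Fin m → SignType} (hY : Measurable Y)
    (hfaces : ∀ᵐ ω ∂μ, (∀ i, Y ω i ≠ 0) → Y ω ∈ Faces) :
    μ {ω | ∀ i, Y ω i ≠ 0} = ∑ C : Chamber m Faces, μ {ω | Y ω = C.1} := by
  have hnull : μ ({ω | ∀ i, Y ω i ≠ 0} \ {ω | Y ω ∈ Faces}) = 0 :=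
    measure_mono_null (fun ω hω (h : (∀ i, Y ω i ≠ 0) → Y ω ∈ Faces) => hω.2 (h hω.1))
      (ae_iff.1 hfaces)
  rw [← measure_inter_conull' hnull,
    show {ω | ∀ i, Y ω i ≠ 0} ∩ {ω | Y ω ∈ Faces}
      = Y ⁻¹' ↑(Faces.filter fun x => ∀ i, x i ≠ 0) by ext; simp [and_comm],
    ← sum_measure_preimage_singleton _ fun x _ => hY (measurableSet_singleton x),
    sum_subtype _ fun x => mem_filter]
  rfl

lemma ae_mem_faces_of_forall_ne_zero (hclosed : ∀ F ∈ Faces, ∀ G ∈ Faces, faceProd F G ∈ Faces)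
    (hne : Faces.Nonempty) (hw0 : ∀ F, 0 ≤ w F) (hsupp : ∀ F, 0 < w F → F ∈ Faces)
    (hmeas : ∀ t, Measurable (D t))
    (hdist : ∀ t F, μ {ω | D t ω = F} = ENNReal.ofReal (w F)) (hP0 : P 0 = fun _ _ => 0)
    (hPstep : ∀ t ω, P (t + 1) ω = faceProd (D t ω) (P t ω)) (t : ℕ) :
    ∀ᵐ ω ∂μ, (∀ i, P t ω i ≠ 0) → P t ω ∈ Faces := by
  filter_upwards [ae_forall_mem_faces hw0 hsupp hmeas hdist] with ω hD hP
  -- a chamber `P` equals `P c` for every face `c`, and `P c` is a product of faces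
  obtain ⟨c, hc⟩ := hne
  rw [← faceProd_eq_left hP c, eq_faceProdTuple hP0 hPstep]
  exact faceProd_faceProdTuple_mem hclosed (fun s => hD s) hc

lemma card_mul_measure_eq_measure_forall_ne_zero {G : Type*} [Group G]
    [MulAction G (Fin m → SignType)]
    (hclosed : ∀ F ∈ Faces, ∀ G ∈ Faces, faceProd F G ∈ Faces) (hne : Faces.Nonempty)
    (hw0 : ∀ F, 0 ≤ w F) (hsupp : ∀ F, 0 < w F → F ∈ Faces)
    (hact : ∀ (g : G) (F F' : Fin m → SignType), g • faceProd F F' = faceProd (g • F) (g • F'))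
    (htrans : ∀ C C' : Chamber m Faces, ∃ g : G, g • C.1 = C'.1)
    (hinv : ∀ (g : G) F, w (g • F) = w F) (hindep : iIndepFun D μ)
    (hmeas : ∀ t, Measurable (D t))
    (hdist : ∀ t F, μ {ω | D t ω = F} = ENNReal.ofReal (w F)) (hP0 : P 0 = fun _ _ => 0)
    (hPstep : ∀ t ω, P (t + 1) ω = faceProd (D t ω) (P t ω)) (t : ℕ) (C : Chamber m Faces) :
    (Fintype.card (Chamber m Faces) : ℝ≥0∞) * μ {ω | P t ω = C.1}
      = μ {ω | ∀ i, P t ω i ≠ 0} := by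
  rw [measure_forall_ne_zero_eq_sum_chamber (measurable_of_succ hmeas hP0 hPstep t)
    (ae_mem_faces_of_forall_ne_zero hclosed hne hw0 hsupp hmeas hdist hP0 hPstep t)]
  have hsymm (C' : Chamber m Faces) : μ {ω | P t ω = C'.1} = μ {ω | P t ω = C.1} := by
    obtain ⟨g, hg⟩ := htrans C C'
    rw [← hg, measure_smul_eq hact hinv hindep hmeas hdist hP0 hPstep]
  rw [sum_congr rfl fun C' _ => hsymm C', sum_const, card_univ, nsmul_eq_mul]

lemma measure_apply_eq_zero (hw0 : ∀ F, 0 ≤ w F) (hsupp : ∀ F, 0 < w F → F ∈ Faces)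
    (hsum : ∑ F ∈ Faces, w F = 1) (hindep : iIndepFun D μ) (hmeas : ∀ t, Measurable (D t))
    (hdist : ∀ t F, μ {ω | D t ω = F} = ENNReal.ofReal (w F)) (hP0 : P 0 = fun _ _ => 0)
    (hPstep : ∀ t ω, P (t + 1) ω = faceProd (D t ω) (P t ω)) (t : ℕ) (i : Fin m) :
    μ {ω | P t ω i = 0} = ENNReal.ofReal ((1 - ∑ F ∈ Faces with F i ≠ 0, w F) ^ t) := by
  have hmiss (s : ℕ) :
      μ (D s ⁻¹' {F | F i = 0}) = ENNReal.ofReal (1 - ∑ F ∈ Faces with F i ≠ 0, w F) := by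
    rw [← sum_filter_not_eq_one_sub hw0 hsupp hsum, ← measure_preimage_finset_eq_ofReal_sum
      (hmeas s) hw0 (hdist s)]
    simp
  calc μ {ω | P t ω i = 0}
      = μ {ω | ∀ s : Fin t, D s ω ∈ {F : Fin m → SignType | F i = 0}} := by
        simp [eq_faceProdTuple hP0 hPstep, faceProdTuple_apply_eq_zero]
    _ = ∏ s : Fin t, μ (D s ⁻¹' {F | F i = 0}) :=
        hindep.measure_forall_fin_mem fun _ => .of_discrete
    _ = _ := by
        rw [prod_congr rfl fun s _ => hmiss s.val, prod_const, card_univ, Fintype.card_fin,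
          ENNReal.ofReal_pow (sub_nonneg.2 (sum_filter_le_one hw0 hsum _))]

lemma one_sub_measure_forall_ne_zero_le [IsProbabilityMeasure μ] (hw0 : ∀ F, 0 ≤ w F)
    (hsupp : ∀ F, 0 < w F → F ∈ Faces) (hsum : ∑ F ∈ Faces, w F = 1) (hindep : iIndepFun D μ)
    (hmeas : ∀ t, Measurable (D t))
    (hdist : ∀ t F, μ {ω | D t ω = F} = ENNReal.ofReal (w F)) (hP0 : P 0 = fun _ _ => 0)
    (hPstep : ∀ t ω, P (t + 1) ω = faceProd (D t ω) (P t ω)) (t : ℕ) :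
    1 - μ {ω | ∀ i, P t ω i ≠ 0}
      ≤ ENNReal.ofReal (∑ i, (1 - ∑ F ∈ Faces with F i ≠ 0, w F) ^ t) := by
  calc 1 - μ {ω | ∀ i, P t ω i ≠ 0}
      = μ {ω | ∀ i, P t ω i ≠ 0}ᶜ :=
        (prob_compl_eq_one_sub (measurable_of_succ hmeas hP0 hPstep t
          (.of_discrete : MeasurableSet {x : Fin m → SignType | ∀ i, x i ≠ 0}))).symm
    _ ≤ ∑ i, μ {ω | P t ω i = 0} := by
        refine (measure_mono fun ω hω => ?_).trans (measure_iUnion_fintype_le μ _)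
        simpa using hω
    _ = _ := by
        rw [ENNReal.ofReal_sum_of_nonneg fun i _ =>
          pow_nonneg (sub_nonneg.2 (sum_filter_le_one hw0 hsum _)) t]
        exact sum_congr rfl fun i _ =>
          measure_apply_eq_zero hw0 hsupp hsum hindep hmeas hdist hP0 hPstep t i

end BHR

theorem bhr_symmetric_sst_and_separation_general (m : ℕ) (Faces : Finset (Fin m → SignType))
    (hclosed : ∀ F ∈ Faces, ∀ G ∈ Faces, faceProd F G ∈ Faces)
    (w : (Fin m → SignType) → ℝ) (hw0 : ∀ F, 0 ≤ w F)
    (hsupp : ∀ F, 0 < w F → F ∈ Faces) (hsum : ∑ F ∈ Faces, w F = 1)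
    (G : Type*) [Group G] [MulAction G (Fin m → SignType)]
    (hact_prod : ∀ (g : G) (F F' : Fin m → SignType),
      g • faceProd F F' = faceProd (g • F) (g • F'))
    (htrans : ∀ C C' : Chamber m Faces, ∃ g : G, g • C.1 = C'.1)
    (hinv : ∀ (g : G) (F : Fin m → SignType), w (g • F) = w F)
    {Ω : Type*} [MeasurableSpace Ω] (μ : Measure Ω) [IsProbabilityMeasure μ]
    (D : ℕ → Ω → (Fin m → SignType)) (hmeas : ∀ t, Measurable (D t))
    (hindep : ProbabilityTheory.iIndepFun D μ)
    (hdist : ∀ (t : ℕ) (F : Fin m → SignType), μ {ω | D t ω = F} = ENNReal.ofReal (w F))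
    (C₀ : Chamber m Faces) (X : ℕ → Ω → (Fin m → SignType))
    (hXstep : ∀ (t : ℕ) (ω : Ω), X (t + 1) ω = faceProd (D t ω) (X t ω))
    -- `P t ω` is the product `F^t F^{t-1} ⋯ F^1` of the faces sampled so far
    (P : ℕ → Ω → (Fin m → SignType)) (hP0 : P 0 = fun _ _ => (0 : SignType))
    (hPstep : ∀ (t : ℕ) (ω : Ω), P (t + 1) ω = faceProd (D t ω) (P t ω)) :
    (∀ (t : ℕ) (C : Chamber m Faces),
      μ {ω | X t ω = C.1 ∧ ∀ i, P t ω i ≠ 0}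
        = (Fintype.card (Chamber m Faces) : ℝ≥0∞)⁻¹ * μ {ω | ∀ i, P t ω i ≠ 0}) ∧
    (∀ (t : ℕ) (C : Chamber m Faces),
      1 - (Fintype.card (Chamber m Faces) : ℝ≥0∞) * μ {ω | X t ω = C.1}
        ≤ ENNReal.ofReal
            (∑ i : Fin m, (1 - ∑ F ∈ Faces.filter (fun F => F i ≠ 0), w F) ^ t)) := by
  have hevent (t : ℕ) (C : Chamber m Faces) :=
    BHR.setOf_eq_and_forall_ne_zero hP0 hPstep hXstep t C.2.2
  have hcard := BHR.card_mul_measure_eq_measure_forall_ne_zero hclosed ⟨C₀.1, C₀.2.1⟩ hw0 hsupp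
    hact_prod htrans hinv hindep hmeas hdist hP0 hPstep
  have hN : (Fintype.card (Chamber m Faces) : ℝ≥0∞) ≠ 0 :=
    Nat.cast_ne_zero.2 (Fintype.card_pos_iff.2 ⟨C₀⟩).ne'
  refine ⟨fun t C => ?_, fun t C => ?_⟩
  · rw [hevent, ← hcard t C, ← mul_assoc, ENNReal.inv_mul_cancel hN (ENNReal.natCast_ne_top _),
      one_mul]
  calc 1 - (Fintype.card (Chamber m Faces) : ℝ≥0∞) * μ {ω | X t ω = C.1}
      ≤ 1 - μ {ω | ∀ i, P t ω i ≠ 0} := by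
        rw [← hcard t C, ← hevent]
        gcongr
        exact And.left
    _ ≤ _ := BHR.one_sub_measure_forall_ne_zero_le hw0 hsupp hsum hindep hmeas hdist hP0 hPstep t

/-- Under the symmetry conditions (a group `G` preserving the arrangement and the face
weights, acting transitively on the chambers, so that the stationary distribution is
uniform on chambers), the first time `T₃` that the product `F^t ⋯ F^1` of the sampled
faces is a chamber is a strong stationary time for the BHR walk, and consequently
`s(t) ≤ ∑_{i=1}^m (1 - ∑_{F ⊄ H_i} w(F))^t`, summing over the `m` hyperplanes. -/
theorem bhr_symmetric_sst_and_separation (m : ℕ) (Faces : Finset (Fin m → SignType))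
    (hclosed : ∀ F ∈ Faces, ∀ G ∈ Faces, faceProd F G ∈ Faces)
    (w : (Fin m → SignType) → ℝ) (hw0 : ∀ F, 0 ≤ w F)
    (hsupp : ∀ F, 0 < w F → F ∈ Faces) (hsum : ∑ F ∈ Faces, w F = 1)
    (hsep : ∀ i : Fin m, ∃ F, 0 < w F ∧ F i ≠ 0)
    (G : Type*) [Group G] [MulAction G (Fin m → SignType)]
    (hact_faces : ∀ (g : G) (F : Fin m → SignType), F ∈ Faces → g • F ∈ Faces)
    (hact_prod : ∀ (g : G) (F F' : Fin m → SignType),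
      g • faceProd F F' = faceProd (g • F) (g • F'))
    (hact_ch : ∀ (g : G) (F : Fin m → SignType), (∀ i, (g • F) i ≠ 0) ↔ ∀ i, F i ≠ 0)
    (htrans : ∀ C C' : Chamber m Faces, ∃ g : G, g • C.1 = C'.1)
    (hinv : ∀ (g : G) (F : Fin m → SignType), w (g • F) = w F)
    {Ω : Type*} [MeasurableSpace Ω] (μ : Measure Ω) [IsProbabilityMeasure μ]
    (D : ℕ → Ω → (Fin m → SignType)) (hmeas : ∀ t, Measurable (D t))
    (hindep : ProbabilityTheory.iIndepFun D μ)
    (hdist : ∀ (t : ℕ) (F : Fin m → SignType), μ {ω | D t ω = F} = ENNReal.ofReal (w F))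
    (C₀ : Chamber m Faces) (X : ℕ → Ω → (Fin m → SignType))
    (hX0 : X 0 = fun _ => C₀.1)
    (hXstep : ∀ (t : ℕ) (ω : Ω), X (t + 1) ω = faceProd (D t ω) (X t ω))
    -- `P t ω` is the product `F^t F^{t-1} ⋯ F^1` of the faces sampled so far
    (P : ℕ → Ω → (Fin m → SignType)) (hP0 : P 0 = fun _ _ => (0 : SignType))
    (hPstep : ∀ (t : ℕ) (ω : Ω), P (t + 1) ω = faceProd (D t ω) (P t ω)) :
    (∀ (t : ℕ) (C : Chamber m Faces),
      μ {ω | X t ω = C.1 ∧ ∀ i, P t ω i ≠ 0}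
        = (Fintype.card (Chamber m Faces) : ℝ≥0∞)⁻¹ * μ {ω | ∀ i, P t ω i ≠ 0}) ∧
    (∀ (t : ℕ) (C : Chamber m Faces),
      1 - (Fintype.card (Chamber m Faces) : ℝ≥0∞) * μ {ω | X t ω = C.1}
        ≤ ENNReal.ofReal
            (∑ i : Fin m, (1 - ∑ F ∈ Faces.filter (fun F => F i ≠ 0), w F) ^ t)) :=
  bhr_symmetric_sst_and_separation_general m Faces hclosed w hw0 hsupp hsum G hact_prod htrans hinv
    μ D hmeas hindep hdist C₀ X hXstep P hP0 hPstep
end
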